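/- arXiv:1410.0572 — 7 statements merged into one kernel-verified Lean document; each statement's English description precedes it below -/
import Mathlib

section
/- For a reflexive binary relation R on a set S, R is proto-transitive if and only if τ(R) = R ∩ R⁻¹ is an equivalence relation on S. -/
/-- `R` is proto-transitive. -/
def ProtoTransitive {S : Type*} (R : S → S → Prop) : Prop :=
  ∀ x y z : S, x ≠ y → y ≠ z → R x y → R y x → R y z → R z y → R x z

/-- `τ(R) = R ∩ R⁻¹`. -/
def tauRel {S : Type*} (R : S → S → Prop) : S → S → Prop :=
  fun x y => R x y ∧ R y x

section

variable {S : Type*} {R : S → S → Prop}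

theorem tauRel_refl (hrefl : ∀ x : S, R x x) (x : S) : tauRel R x x :=
  ⟨hrefl x, hrefl x⟩

theorem tauRel_symm {x y : S} (h : tauRel R x y) : tauRel R y x :=
  ⟨h.2, h.1⟩

theorem ProtoTransitive.tauRel_trans (h : ProtoTransitive R) {x y z : S}
    (hxy : tauRel R x y) (hyz : tauRel R y z) : tauRel R x z := by
  obtain rfl | hne_xy := eq_or_ne x y
  · exact hyz
  obtain rfl | hne_yz := eq_or_ne y z
  · exact hxy
  exact ⟨h x y z hne_xy hne_yz hxy.1 hxy.2 hyz.1 hyz.2,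
    h z y x hne_yz.symm hne_xy.symm hyz.2 hyz.1 hxy.2 hxy.1⟩

theorem protoTransitive_iff_tauRel_trans :
    ProtoTransitive R ↔ ∀ ⦃x y z : S⦄, tauRel R x y → tauRel R y z → tauRel R x z :=
  ⟨fun h _ _ _ => h.tauRel_trans,
    fun h _ _ _ _ _ hxy hyx hyz hzy => (h ⟨hxy, hyx⟩ ⟨hyz, hzy⟩).1⟩

end

/-- for a reflexive relation `R`, `R` is proto-transitive iff
`τ(R) = R ∩ R⁻¹` is an equivalence relation. -/
theorem protoTransitive_iff_tau_equivalence {S : Type*} (R : S → S → Prop)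
    (hrefl : ∀ x : S, R x x) :
    ProtoTransitive R ↔ Equivalence (tauRel R) := by
  rw [protoTransitive_iff_tauRel_trans]
  exact ⟨fun htrans => ⟨tauRel_refl hrefl, tauRel_symm, fun hxy hyz => htrans hxy hyz⟩,
    fun hequiv _ _ _ => hequiv.trans⟩
end

section
/- In a PRAX (S,R): every upper proto-definite subset is also u_o-definite, i.e. if A^u = A then A^{u_o} = A; moreover the collection of upper proto-definite subsets {A ⊆ S : A^u = A} is closed under arbitrary unions and arbitrary (nonempty) intersections, so it forms a complete sublattice of the powerset of S under inclusion. -/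
/-- Successor neighborhood `[x] = {y | R y x}`. -/
def nbhd {S : Type*} (R : S → S → Prop) (x : S) : Set S := {y | R y x}

/-- Symmetrized successor neighborhood `[x]ₒ = {y | R y x ∧ R x y}`. -/
def nbhdO {S : Type*} (R : S → S → Prop) (x : S) : Set S := {y | R y x ∧ R x y}

/-- Lower proto approximation `A^l = ⋃ {[x] | [x] ⊆ A}`. -/
def lowerP {S : Type*} (R : S → S → Prop) (A : Set S) : Set S :=
  {z | ∃ x : S, z ∈ nbhd R x ∧ nbhd R x ⊆ A}

/-- Upper proto approximation `A^u = ⋃ {[x] | [x] ∩ A ≠ ∅}`. -/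
def upperP {S : Type*} (R : S → S → Prop) (A : Set S) : Set S :=
  {z | ∃ x : S, z ∈ nbhd R x ∧ (nbhd R x ∩ A).Nonempty}

/-- Symmetrized lower proto approximation `A^{l_o}`. -/
def lowerO {S : Type*} (R : S → S → Prop) (A : Set S) : Set S :=
  {z | ∃ x : S, z ∈ nbhdO R x ∧ nbhdO R x ⊆ A}

/-- Symmetrized upper proto approximation `A^{u_o}`. -/
def upperO {S : Type*} (R : S → S → Prop) (A : Set S) : Set S :=
  {z | ∃ x : S, z ∈ nbhdO R x ∧ (nbhdO R x ∩ A).Nonempty}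

/-- Point-wise lower approximation `A^{l+} = {x | [x] ⊆ A}`. -/
def lPlus {S : Type*} (R : S → S → Prop) (A : Set S) : Set S :=
  {x | nbhd R x ⊆ A}

/-- Point-wise upper approximation `A^{u+} = {x | [x] ∩ A ≠ ∅}`. -/
def uPlus {S : Type*} (R : S → S → Prop) (A : Set S) : Set S :=
  {x | (nbhd R x ∩ A).Nonempty}

/-!
Reflexivity gives `A ⊆ A^u` and `A ⊆ A^{u_o}`, while `[x]_o ⊆ [x]` gives `A^{u_o} ⊆ A^u`;
so `A^u = A` squeezes `A^{u_o}` to `A`. The upper approximation commutes with unions and is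
monotone, which handles unions and intersections of fixed points.
-/

section

variable {S : Type*} (R : S → S → Prop)

theorem subset_upperP (hrefl : ∀ x, R x x) (A : Set S) : A ⊆ upperP R A :=
  fun z hz => ⟨z, hrefl z, z, hrefl z, hz⟩

theorem subset_upperO (hrefl : ∀ x, R x x) (A : Set S) : A ⊆ upperO R A :=
  fun z hz => ⟨z, ⟨hrefl z, hrefl z⟩, z, ⟨hrefl z, hrefl z⟩, hz⟩

theorem upperO_subset_upperP (A : Set S) : upperO R A ⊆ upperP R A :=
  fun _ ⟨x, ⟨hzx, _⟩, w, ⟨hwx, _⟩, hwA⟩ => ⟨x, hzx, w, hwx, hwA⟩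

theorem upperP_mono : Monotone (upperP R) :=
  fun _ _ hAB _ ⟨x, hzx, w, hwx, hwA⟩ => ⟨x, hzx, w, hwx, hAB hwA⟩

theorem upperP_sUnion (𝒜 : Set (Set S)) : upperP R (⋃₀ 𝒜) = ⋃ A ∈ 𝒜, upperP R A := by
  ext z
  simp only [Set.mem_iUnion, exists_prop]
  constructor
  · rintro ⟨x, hzx, w, hwx, A, hA, hwA⟩
    exact ⟨A, hA, x, hzx, w, hwx, hwA⟩
  · rintro ⟨A, hA, x, hzx, w, hwx, hwA⟩
    exact ⟨x, hzx, w, hwx, A, hA, hwA⟩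

theorem upperP_sInter_subset (𝒜 : Set (Set S)) : upperP R (⋂₀ 𝒜) ⊆ ⋂ A ∈ 𝒜, upperP R A :=
  Set.subset_iInter₂ fun _ hA => upperP_mono R (Set.sInter_subset_of_mem hA)

end

theorem upperDefinite_props_general {S : Type*} (R : S → S → Prop)
    (hrefl : ∀ x : S, R x x) :
    (∀ A : Set S, upperP R A = A → upperO R A = A) ∧
    (∀ 𝒜 : Set (Set S), (∀ A ∈ 𝒜, upperP R A = A) → upperP R (⋃₀ 𝒜) = ⋃₀ 𝒜) ∧
    (∀ 𝒜 : Set (Set S), 𝒜.Nonempty → (∀ A ∈ 𝒜, upperP R A = A) →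
      upperP R (⋂₀ 𝒜) = ⋂₀ 𝒜) := by
  refine ⟨fun A hA => ?_, fun 𝒜 h𝒜 => ?_, fun 𝒜 _ h𝒜 => ?_⟩
  · exact ((upperO_subset_upperP R A).trans hA.le).antisymm (subset_upperO R hrefl A)
  · rw [upperP_sUnion, Set.sUnion_eq_biUnion]
    exact Set.iUnion₂_congr h𝒜
  · refine ((upperP_sInter_subset R 𝒜).trans ?_).antisymm (subset_upperP R hrefl _)
    rw [Set.sInter_eq_biInter]
    exact Set.iInter₂_mono fun A hA => (h𝒜 A hA).le

/-- in a PRAX, every upper proto-definite set is `u_o`-definite, and the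
upper proto-definite sets are closed under arbitrary unions and arbitrary nonempty
intersections (hence form a complete sublattice of the powerset under inclusion). -/
theorem upperDefinite_props {S : Type*} (R : S → S → Prop)
    (hrefl : ∀ x : S, R x x) (hproto : ProtoTransitive R) :
    (∀ A : Set S, upperP R A = A → upperO R A = A) ∧
    (∀ 𝒜 : Set (Set S), (∀ A ∈ 𝒜, upperP R A = A) → upperP R (⋃₀ 𝒜) = ⋃₀ 𝒜) ∧
    (∀ 𝒜 : Set (Set S), 𝒜.Nonempty → (∀ A ∈ 𝒜, upperP R A = A) →
      upperP R (⋂₀ 𝒜) = ⋂₀ 𝒜) :=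
  upperDefinite_props_general R hrefl
end

section
/- In a PRAX (S,R), for any A, B ⊆ S: sk(A) = sk(B) if and only if A^l = B^l and A^{l+} = B^{l+}; moreover if B ∈ sk(A) then A^l ⊆ B^u. -/
/-- Skeletons of `A`: subsets `B ⊆ A^{l+}` with `⋃_{x ∈ B} [x] = A^l`. -/
def skel {S : Type*} (R : S → S → Prop) (A : Set S) : Set (Set S) :=
  {B | B ⊆ lPlus R A ∧ (⋃ x ∈ B, nbhd R x) = lowerP R A}

/-!
`A^{l+}` is itself a skeleton of `A`, and every skeleton of `A` lies inside it, so `sk(A)`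
determines `A^{l+}` as its largest member and `A^l` as the union of any member; conversely
`sk(A)` is defined from `A^l` and `A^{l+}` alone. For the inclusion `A^l ⊆ B^u`, a point of
`[x]` with `x ∈ B` lies in a neighborhood meeting `B`, namely at `x` itself by reflexivity.
-/

section Skeleton

variable {S : Type*} (R : S → S → Prop)

theorem biUnion_lPlus_nbhd_eq_lowerP (A : Set S) :
    (⋃ x ∈ lPlus R A, nbhd R x) = lowerP R A := by
  ext z
  simp only [Set.mem_iUnion, lowerP, lPlus, Set.mem_ofPred_eq, exists_prop]
  tauto

theorem lPlus_mem_skel (A : Set S) : lPlus R A ∈ skel R A :=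
  ⟨subset_rfl, biUnion_lPlus_nbhd_eq_lowerP R A⟩

theorem skel_eq_iff (A B : Set S) :
    skel R A = skel R B ↔ lowerP R A = lowerP R B ∧ lPlus R A = lPlus R B := by
  constructor
  · intro h
    have hAB : lPlus R A ∈ skel R B := h ▸ lPlus_mem_skel R A
    have hBA : lPlus R B ∈ skel R A := h.symm ▸ lPlus_mem_skel R B
    refine ⟨?_, hAB.1.antisymm hBA.1⟩
    rw [← biUnion_lPlus_nbhd_eq_lowerP R A, hAB.2]
  · rintro ⟨hl, hlPlus⟩
    simp only [skel, hl, hlPlus]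

theorem biUnion_nbhd_subset_upperP (hrefl : ∀ x, R x x) (B : Set S) :
    (⋃ x ∈ B, nbhd R x) ⊆ upperP R B := by
  intro z hz
  obtain ⟨x, hxB, hzx⟩ := Set.mem_iUnion₂.mp hz
  exact ⟨x, hzx, x, hrefl x, hxB⟩

theorem lowerP_subset_upperP_of_mem_skel (hrefl : ∀ x, R x x) {A B : Set S}
    (hB : B ∈ skel R A) : lowerP R A ⊆ upperP R B :=
  hB.2 ▸ biUnion_nbhd_subset_upperP R hrefl B

end Skeleton

theorem skeleton_eq_iff_and_lower_subset_upper_general {S : Type*} (R : S → S → Prop)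
    (hrefl : ∀ x : S, R x x) :
    (∀ A B : Set S, skel R A = skel R B ↔
      (lowerP R A = lowerP R B ∧ lPlus R A = lPlus R B)) ∧
    (∀ A B : Set S, B ∈ skel R A → lowerP R A ⊆ upperP R B) :=
  ⟨skel_eq_iff R, fun _ _ => lowerP_subset_upperP_of_mem_skel R hrefl⟩

/-- in a PRAX, `sk(A) = sk(B)` iff `A^l = B^l` and `A^{l+} = B^{l+}`;
moreover if `B ∈ sk(A)` then `A^l ⊆ B^u`. -/
theorem skeleton_eq_iff_and_lower_subset_upper {S : Type*} (R : S → S → Prop)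
    (hrefl : ∀ x : S, R x x) (hproto : ProtoTransitive R) :
    (∀ A B : Set S, skel R A = skel R B ↔
      (lowerP R A = lowerP R B ∧ lPlus R A = lPlus R B)) ∧
    (∀ A B : Set S, B ∈ skel R A → lowerP R A ⊆ upperP R B) :=
  skeleton_eq_iff_and_lower_subset_upper_general R hrefl
end

section
/- In a PRAX (S,R), for every A ⊆ S: A^{l+} ⊆ A^{l_o} and A^{u_o} ⊆ A^{u+}. -/
section Prax

variable {S : Type*} {R : S → S → Prop}

theorem nbhdO_subset_nbhd (x : S) : nbhdO R x ⊆ nbhd R x := fun _ hy => hy.1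

theorem mem_nbhdO_self (hrefl : ∀ x : S, R x x) (x : S) : x ∈ nbhdO R x :=
  ⟨hrefl x, hrefl x⟩

/-- Proto-transitivity is applied through the centre `x`; when two of `x`, `y`, `z` coincide,
the conclusion is one of the hypotheses or an instance of reflexivity. -/
theorem ProtoTransitive.rel_of_mem_nbhdO (hrefl : ∀ x : S, R x x) (hproto : ProtoTransitive R)
    {x y z : S} (hy : y ∈ nbhdO R x) (hz : z ∈ nbhdO R x) : R y z := by
  obtain ⟨hyx, hxy⟩ := hy
  obtain ⟨hzx, hxz⟩ := hz
  rcases eq_or_ne y z with rfl | hyz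
  · exact hrefl y
  rcases eq_or_ne y x with rfl | hy_ne_x
  · exact hxz
  rcases eq_or_ne x z with rfl | hx_ne_z
  · exact hyx
  exact hproto y x z hy_ne_x hx_ne_z hyx hxy hxz hzx

theorem lPlus_subset_lowerO (hrefl : ∀ x : S, R x x) (A : Set S) :
    lPlus R A ⊆ lowerO R A :=
  fun x hx => ⟨x, mem_nbhdO_self hrefl x, (nbhdO_subset_nbhd x).trans hx⟩

theorem upperO_subset_uPlus (hrefl : ∀ x : S, R x x) (hproto : ProtoTransitive R) (A : Set S) :
    upperO R A ⊆ uPlus R A := by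
  rintro z ⟨x, hz, y, hy, hyA⟩
  exact ⟨y, hproto.rel_of_mem_nbhdO hrefl hy hz, hyA⟩

end Prax

/-- in a PRAX, `A^{l+} ⊆ A^{l_o}` and `A^{u_o} ⊆ A^{u+}`. -/
theorem lPlus_subset_lowerO_and_upperO_subset_uPlus {S : Type*} (R : S → S → Prop)
    (hrefl : ∀ x : S, R x x) (hproto : ProtoTransitive R) (A : Set S) :
    lPlus R A ⊆ lowerO R A ∧ upperO R A ⊆ uPlus R A :=
  ⟨lPlus_subset_lowerO hrefl A, upperO_subset_uPlus hrefl hproto A⟩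
end

section
/- In a PRAX (S,R), for every A ⊆ S the progressive set π₀(A) has empty lower approximation, i.e. (π₀(A))^l = ∅; moreover the forward-looking set satisfies (F₀(A))^u ⊆ A^u. -/
/-- The progressive set `π₀(A) = {y ∈ A : ∃ a ∉ A, R a y}`. -/
def progressiveSet {S : Type*} (R : S → S → Prop) (A : Set S) : Set S :=
  {y | y ∈ A ∧ ∃ a, a ∉ A ∧ R a y}

/-- The forward-looking set `F₀(A) = {y ∈ A : ∃ a ∉ A, R y a}`. -/
def forwardSet {S : Type*} (R : S → S → Prop) (A : Set S) : Set S :=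
  {y | y ∈ A ∧ ∃ a, a ∉ A ∧ R y a}

theorem progressiveSet_subset {S : Type*} (R : S → S → Prop) (A : Set S) :
    progressiveSet R A ⊆ A :=
  fun _ hy => hy.1

theorem forwardSet_subset {S : Type*} (R : S → S → Prop) (A : Set S) :
    forwardSet R A ⊆ A :=
  fun _ hy => hy.1

theorem upperP_mono_s11 {S : Type*} (R : S → S → Prop) {A B : Set S} (h : A ⊆ B) :
    upperP R A ⊆ upperP R B :=
  fun _ ⟨x, hzx, w, hwx, hwA⟩ => ⟨x, hzx, w, hwx, h hwA⟩

theorem nbhd_not_subset_progressiveSet {S : Type*} {R : S → S → Prop} {x : S} (hx : R x x)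
    (A : Set S) : ¬ nbhd R x ⊆ progressiveSet R A := by
  intro hsub
  obtain ⟨-, a, haA, hax⟩ := hsub hx
  exact haA (progressiveSet_subset R A (hsub hax))

theorem lowerP_progressiveSet_eq_empty {S : Type*} {R : S → S → Prop} (hrefl : ∀ x : S, R x x)
    (A : Set S) : lowerP R (progressiveSet R A) = ∅ :=
  Set.eq_empty_iff_forall_notMem.2 fun _ ⟨x, _, hsub⟩ =>
    nbhd_not_subset_progressiveSet (hrefl x) A hsub

theorem progressive_lower_empty_and_forward_upper_subset_general {S : Type*} (R : S → S → Prop)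
    (hrefl : ∀ x : S, R x x) (A : Set S) :
    lowerP R (progressiveSet R A) = ∅ ∧
    upperP R (forwardSet R A) ⊆ upperP R A :=
  ⟨lowerP_progressiveSet_eq_empty hrefl A, upperP_mono_s11 R (forwardSet_subset R A)⟩

/-- in a PRAX, `(π₀(A))^l = ∅` and `(F₀(A))^u ⊆ A^u`. -/
theorem progressive_lower_empty_and_forward_upper_subset {S : Type*} (R : S → S → Prop)
    (hrefl : ∀ x : S, R x x) (hproto : ProtoTransitive R) (A : Set S) :
    lowerP R (progressiveSet R A) = ∅ ∧
    upperP R (forwardSet R A) ⊆ upperP R A :=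
  progressive_lower_empty_and_forward_upper_subset_general R hrefl A
end

section
/- Let (S,R) be a PRAX and R^# the transitive closure of R. Then for every A ⊆ S: A^{l_# l} = A^{l_#} = A^{l l_#} = A^{l_# l_#} (i.e. applying the R-lower approximation after the R^#-lower approximation, or the R^#-lower approximation after the R-lower approximation, or the R^#-lower approximation twice, all give A^{l_#}). -/
/-- `[x]_# = {y | R^# y x}`, where `R^#` is the transitive closure of `R`. -/
def nbhdT {S : Type*} (R : S → S → Prop) (x : S) : Set S :=
  {y | Relation.TransGen R y x}

/-- Lower approximation `A^{l_#}` with respect to the transitive closure `R^#`. -/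
def lowerT {S : Type*} (R : S → S → Prop) (A : Set S) : Set S :=
  {z | ∃ x : S, z ∈ nbhdT R x ∧ nbhdT R x ⊆ A}

/-- Upper approximation `A^{u_#}` with respect to the transitive closure `R^#`. -/
def upperT {S : Type*} (R : S → S → Prop) (A : Set S) : Set S :=
  {z | ∃ x : S, z ∈ nbhdT R x ∧ (nbhdT R x ∩ A).Nonempty}

/-!
`A^{l_#}` is closed under `R^#`-predecessors, and for a reflexive `R` a set closed under
predecessors is fixed by both lower approximations: each of its points `z` is covered by its own
neighbourhood. This gives the outer identities; the middle one follows from them by monotonicity,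
since `A^{l_#} = A^{l_# l} ⊆ A^l`.
-/

section Approximations

variable {S : Type*} (R : S → S → Prop)

theorem lowerP_mono : Monotone (lowerP R) :=
  fun _ _ hAB _ ⟨x, hzx, hxA⟩ => ⟨x, hzx, hxA.trans hAB⟩

theorem lowerT_mono : Monotone (lowerT R) :=
  fun _ _ hAB _ ⟨x, hzx, hxA⟩ => ⟨x, hzx, hxA.trans hAB⟩

theorem lowerP_subset (A : Set S) : lowerP R A ⊆ A :=
  fun _ ⟨_, hzx, hxA⟩ => hxA hzx

theorem lowerT_subset (A : Set S) : lowerT R A ⊆ A :=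
  fun _ ⟨_, hzx, hxA⟩ => hxA hzx

variable {R}

theorem mem_lowerT_of_transGen {A : Set S} {y z : S} (hyz : Relation.TransGen R y z)
    (hz : z ∈ lowerT R A) : y ∈ lowerT R A :=
  let ⟨x, hzx, hxA⟩ := hz
  ⟨x, hyz.trans hzx, hxA⟩

theorem lowerP_eq_self (hrefl : ∀ x : S, R x x) {B : Set S}
    (hB : ∀ ⦃y z⦄, R y z → z ∈ B → y ∈ B) : lowerP R B = B :=
  (lowerP_subset R B).antisymm fun z hz => ⟨z, hrefl z, fun _ hyz => hB hyz hz⟩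

theorem lowerT_eq_self (hrefl : ∀ x : S, R x x) {B : Set S}
    (hB : ∀ ⦃y z⦄, Relation.TransGen R y z → z ∈ B → y ∈ B) : lowerT R B = B :=
  (lowerT_subset R B).antisymm fun z hz => ⟨z, .single (hrefl z), fun _ hyz => hB hyz hz⟩

end Approximations

theorem lowerT_absorption_general {S : Type*} (R : S → S → Prop)
    (hrefl : ∀ x : S, R x x) (A : Set S) :
    lowerP R (lowerT R A) = lowerT R A ∧
    lowerT R (lowerP R A) = lowerT R A ∧
    lowerT R (lowerT R A) = lowerT R A := by
  have hTT : lowerT R (lowerT R A) = lowerT R A :=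
    lowerT_eq_self hrefl fun _ _ => mem_lowerT_of_transGen
  have hPT : lowerP R (lowerT R A) = lowerT R A :=
    lowerP_eq_self hrefl fun _ _ hyz => mem_lowerT_of_transGen (.single hyz)
  have hT_sub_P : lowerT R A ⊆ lowerP R A :=
    hPT ▸ lowerP_mono R (lowerT_subset R A)
  refine ⟨hPT, (lowerT_mono R (lowerP_subset R A)).antisymm ?_, hTT⟩
  calc lowerT R A = lowerT R (lowerT R A) := hTT.symm
    _ ⊆ lowerT R (lowerP R A) := lowerT_mono R hT_sub_P

/-- in a PRAX, `A^{l_# l} = A^{l_#} = A^{l l_#} = A^{l_# l_#}`. -/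
theorem lowerT_absorption {S : Type*} (R : S → S → Prop)
    (hrefl : ∀ x : S, R x x) (hproto : ProtoTransitive R) (A : Set S) :
    lowerP R (lowerT R A) = lowerT R A ∧
    lowerT R (lowerP R A) = lowerT R A ∧
    lowerT R (lowerT R A) = lowerT R A :=
  lowerT_absorption_general R hrefl A
end

section
/- In a PRAX (S,R), the relation R^h = R^⋋ ∩ R^• is empty. -/
/-- Predecessor (inverted successor) neighborhood `[x]ᵢ = {y | R x y}`. -/
def nbhdI {S : Type*} (R : S → S → Prop) (x : S) : Set S := {y | R x y}

/-- `R^• a b` iff `R a b` and not both `R^# a b` and `R^# b a` (with `R^#` the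
transitive closure). -/
def rDot {S : Type*} (R : S → S → Prop) : S → S → Prop :=
  fun a b => R a b ∧ ¬ (Relation.TransGen R a b ∧ Relation.TransGen R b a)

/-- `R^⋋ a b` iff `[b] ⊂ [a]` and `[a]ᵢ ⊂ [b]ᵢ` (proper inclusions). -/
def rLf {S : Type*} (R : S → S → Prop) : S → S → Prop :=
  fun a b => nbhd R b ⊂ nbhd R a ∧ nbhdI R a ⊂ nbhdI R b

/-- `R^h a b` iff `R^⋋ a b` and `R^• a b`. -/
def rH {S : Type*} (R : S → S → Prop) : S → S → Prop :=
  fun a b => rLf R a b ∧ rDot R a b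

theorem rLf.rel_symm {S : Type*} {R : S → S → Prop} (hrefl : ∀ x : S, R x x) {a b : S}
    (h : rLf R a b) : R b a :=
  h.1.subset (hrefl b)

theorem not_rDot_of_rel {S : Type*} {R : S → S → Prop} {a b : S} (hba : R b a) :
    ¬ rDot R a b :=
  fun ⟨hab, hnot⟩ => hnot ⟨.single hab, .single hba⟩

theorem rH_empty_general {S : Type*} (R : S → S → Prop)
    (hrefl : ∀ x : S, R x x) :
    ∀ a b : S, ¬ rH R a b :=
  fun _ _ ⟨hlf, hdot⟩ => not_rDot_of_rel (hlf.rel_symm hrefl) hdot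

/-- in a PRAX, the relation `R^h = R^⋋ ∩ R^•` is empty. -/
theorem rH_empty {S : Type*} (R : S → S → Prop)
    (hrefl : ∀ x : S, R x x) (hproto : ProtoTransitive R) :
    ∀ a b : S, ¬ rH R a b :=
  rH_empty_general R hrefl
end
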